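/- arXiv:1503.00037 — 2 statements merged into one kernel-verified Lean document; each statement's English description precedes it below -/
import Mathlib

section
/- The function u(x) = 2·ln(((e^{u₀/2}+1)·e^{√2·x} + (e^{u₀/2}-1)) / ((e^{u₀/2}+1)·e^{√2·x} - (e^{u₀/2}-1))) satisfies the differential equation u''(x) = 2·sinh(u(x)) for all x > 0, for every u₀ > 0. -/
/-! Writing `f = a e^{κy}`, so that `f' = κ f`, the profile is `u = 2 log ((f + b)/(f - b))`.
Two differentiations give `u'' = 4 κ² b f (f² + b²)/(f² - b²)²`, and the same rational function
is `sinh (2 log r) = (r² - r⁻²)/2` at `r = (f + b)/(f - b)`. Hence `u'' = κ² sinh u` wherever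
`f ≠ ±b`; the colloid profile is the case `κ = √2`, `a = e^{u₀/2} + 1`, `b = a - 2`, where
`f ± b > 0` for `x > 0`. -/

open Real Filter Topology

lemma Real.sinh_two_mul_log {r : ℝ} (hr : r ≠ 0) : sinh (2 * log r) = (r ^ 2 - (r ^ 2)⁻¹) / 2 := by
  have hexp : exp (2 * log r) = r ^ 2 := by
    rw [two_mul, exp_add, exp_log_eq_abs hr, abs_mul_abs_self, sq]
  rw [sinh_eq, exp_neg, hexp]

lemma HasDerivAt.two_log_add_div_sub {f : ℝ → ℝ} {f' b y : ℝ} (hf : HasDerivAt f f' y)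
    (hp : f y + b ≠ 0) (hm : f y - b ≠ 0) :
    HasDerivAt (fun z => 2 * Real.log ((f z + b) / (f z - b)))
      (-4 * b * f' / (f y ^ 2 - b ^ 2)) y := by
  refine ((((hf.add_const b).div (hf.sub_const b) hm).log (div_ne_zero hp hm)).const_mul 2
    ).congr_deriv ?_
  rw [Pi.div_apply, sq_sub_sq]
  field_simp
  ring

lemma HasDerivAt.div_sq_sub {f : ℝ → ℝ} {f' b y : ℝ} (hf : HasDerivAt f f' y)
    (h : f y ^ 2 - b ^ 2 ≠ 0) :
    HasDerivAt (fun z => f z / (f z ^ 2 - b ^ 2))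
      (-f' * (f y ^ 2 + b ^ 2) / (f y ^ 2 - b ^ 2) ^ 2) y := by
  refine (hf.div ((hf.pow 2).sub_const (b ^ 2)) h).congr_deriv ?_
  simp only [Pi.pow_apply]
  field_simp
  ring

lemma hasDerivAt_mul_exp (a κ y : ℝ) :
    HasDerivAt (fun z => a * exp (κ * z)) (κ * (a * exp (κ * y))) y :=
  ((((hasDerivAt_id y).const_mul κ).exp).const_mul a).congr_deriv (by simp only [id, mul_one]; ring)

theorem deriv_deriv_two_log_mul_exp_ratio {a b κ x : ℝ} (hp : a * exp (κ * x) + b ≠ 0)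
    (hm : a * exp (κ * x) - b ≠ 0) :
    deriv (deriv fun y => 2 * log ((a * exp (κ * y) + b) / (a * exp (κ * y) - b))) x
      = κ ^ 2 * sinh (2 * log ((a * exp (κ * x) + b) / (a * exp (κ * x) - b))) := by
  have hopen : IsOpen {y | a * exp (κ * y) + b ≠ 0 ∧ a * exp (κ * y) - b ≠ 0} :=
    (isOpen_ne_fun (by fun_prop) (by fun_prop)).inter (isOpen_ne_fun (by fun_prop) (by fun_prop))
  have hderiv : deriv (fun y => 2 * log ((a * exp (κ * y) + b) / (a * exp (κ * y) - b)))
      =ᶠ[𝓝 x] fun y => -4 * b * κ * (a * exp (κ * y) / ((a * exp (κ * y)) ^ 2 - b ^ 2)) := by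
    filter_upwards [hopen.mem_nhds ⟨hp, hm⟩] with y ⟨hpy, hmy⟩
    rw [((hasDerivAt_mul_exp a κ y).two_log_add_div_sub hpy hmy).deriv]
    ring
  have hsq : (a * exp (κ * x)) ^ 2 - b ^ 2 ≠ 0 := by
    rw [sq_sub_sq]
    exact mul_ne_zero hp hm
  rw [hderiv.deriv_eq, (((hasDerivAt_mul_exp a κ x).div_sq_sub hsq).const_mul _).deriv,
    sinh_two_mul_log (div_ne_zero hp hm)]
  generalize a * exp (κ * x) = F at *
  field_simp
  ring

theorem colloid_exact_solution_ode_general (u₀ : ℝ) :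
    ∀ x : ℝ, 0 < x →
      deriv (deriv (fun y : ℝ =>
        2 * Real.log (((Real.exp (u₀/2) + 1) * Real.exp (Real.sqrt 2 * y) + (Real.exp (u₀/2) - 1)) /
          ((Real.exp (u₀/2) + 1) * Real.exp (Real.sqrt 2 * y) - (Real.exp (u₀/2) - 1))))) x
      = 2 * Real.sinh
          (2 * Real.log (((Real.exp (u₀/2) + 1) * Real.exp (Real.sqrt 2 * x) + (Real.exp (u₀/2) - 1)) /
            ((Real.exp (u₀/2) + 1) * Real.exp (Real.sqrt 2 * x) - (Real.exp (u₀/2) - 1)))) := by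
  intro x hx
  have hc : 0 < exp (u₀ / 2) := exp_pos _
  have hE : 1 < exp (√2 * x) := one_lt_exp_iff.mpr (by positivity)
  have hp : (exp (u₀ / 2) + 1) * exp (√2 * x) + (exp (u₀ / 2) - 1) ≠ 0 := by nlinarith
  have hm : (exp (u₀ / 2) + 1) * exp (√2 * x) - (exp (u₀ / 2) - 1) ≠ 0 := by nlinarith
  rw [deriv_deriv_two_log_mul_exp_ratio hp hm, sq_sqrt zero_le_two]

/-- The exact colloid solution satisfies u'' = 2·sinh(u) on (0,∞). -/
theorem colloid_exact_solution_ode (u₀ : ℝ) (h : 0 < u₀) :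
    ∀ x : ℝ, 0 < x →
      deriv (deriv (fun y : ℝ =>
        2 * Real.log (((Real.exp (u₀/2) + 1) * Real.exp (Real.sqrt 2 * y) + (Real.exp (u₀/2) - 1)) /
          ((Real.exp (u₀/2) + 1) * Real.exp (Real.sqrt 2 * y) - (Real.exp (u₀/2) - 1))))) x
      = 2 * Real.sinh
          (2 * Real.log (((Real.exp (u₀/2) + 1) * Real.exp (Real.sqrt 2 * x) + (Real.exp (u₀/2) - 1)) /
            ((Real.exp (u₀/2) + 1) * Real.exp (Real.sqrt 2 * x) - (Real.exp (u₀/2) - 1)))) :=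
  colloid_exact_solution_ode_general u₀
end

section
/- The derivative at the origin of the exact colloid solution satisfies u'(0) = -2·√(cosh(u₀) - 1) for every u₀ > 0. -/
/-!
With `c = exp (u₀ / 2)` the solution is `2 log (N / D)` with `N(0) = 2c`, `D(0) = 2` and
`N' = D' = √2 (c + 1)`, so `u'(0) = -√2 (c² - 1) / c = -2√2 sinh (u₀ / 2)`. On the other side
`cosh u₀ - 1 = 2 sinh² (u₀ / 2)`, whose square root is `√2 sinh (u₀ / 2)` because `u₀ ≥ 0`.
-/

open Real

lemma Real.cosh_sub_one_eq_two_mul_sinh_half_sq (x : ℝ) : cosh x - 1 = 2 * sinh (x / 2) ^ 2 := by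
  have h := cosh_two_mul (x / 2)
  rw [show 2 * (x / 2) = x by ring, cosh_sq] at h
  linarith

lemma Real.sqrt_cosh_sub_one {x : ℝ} (hx : 0 ≤ x) : √(cosh x - 1) = √2 * sinh (x / 2) := by
  rw [cosh_sub_one_eq_two_mul_sinh_half_sq, sqrt_mul zero_le_two,
    sqrt_sq (sinh_nonneg_iff.2 (by linarith))]

lemma hasDerivAt_two_mul_log_div_exp (a b k x : ℝ) (hN : a * exp (k * x) + b ≠ 0)
    (hD : a * exp (k * x) - b ≠ 0) :
    HasDerivAt (fun x => 2 * log ((a * exp (k * x) + b) / (a * exp (k * x) - b)))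
      (-4 * a * b * k * exp (k * x) / ((a * exp (k * x) + b) * (a * exp (k * x) - b))) x := by
  have hE : HasDerivAt (fun x => a * exp (k * x)) (a * (exp (k * x) * k)) x :=
    (((hasDerivAt_id x).const_mul k).exp.congr_deriv (by simp)).const_mul a
  have hQ := ((hE.add_const b).div (hE.sub_const b) hD).log (div_ne_zero hN hD)
  refine (hQ.const_mul 2).congr_deriv ?_
  simp only [Pi.div_apply]
  field_simp
  ring

/-- The right derivative at 0 of the exact colloid solution equals -2·√(cosh u₀ - 1). -/
theorem colloid_exact_solution_deriv_at_zero (u₀ : ℝ) (h : 0 < u₀) :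
    derivWithin (fun x : ℝ =>
      2 * Real.log (((Real.exp (u₀/2) + 1) * Real.exp (Real.sqrt 2 * x) + (Real.exp (u₀/2) - 1)) /
        ((Real.exp (u₀/2) + 1) * Real.exp (Real.sqrt 2 * x) - (Real.exp (u₀/2) - 1))))
      (Set.Ici 0) 0 = -2 * Real.sqrt (Real.cosh u₀ - 1) := by
  rw [sqrt_cosh_sub_one h.le, sinh_eq, exp_neg]
  have hc : 0 < exp (u₀ / 2) := exp_pos _
  generalize exp (u₀ / 2) = c at hc ⊢
  have hderiv := hasDerivAt_two_mul_log_div_exp (c + 1) (c - 1) (√2) 0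
    (by simp only [mul_zero, exp_zero]; linarith) (by simp only [mul_zero, exp_zero]; linarith)
  rw [hderiv.hasDerivWithinAt.derivWithin (uniqueDiffOn_Ici 0 0 Set.self_mem_Ici)]
  simp only [mul_zero, exp_zero, mul_one]
  rw [show c + 1 + (c - 1) = 2 * c by ring, show c + 1 - (c - 1) = 2 by ring]
  field_simp
  ring
end
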